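/- Let S and T be monoids with zeros, λ₂ ≥ λ₁ ≥ 1 cardinals. Let h : S → T be a homomorphism with h(0_S) = 0_T, φ : I_{λ₁} → I_{λ₂} an injective map, e a non-zero idempotent of T, H_e the maximal subgroup of T with identity e, and u : I_{λ₁} → H_e a map. Then I_h = {s ∈ S : h(s) = 0_T} is an ideal of S, and the map σ : B⁰_{λ₁}(S) → B⁰_{λ₂}(T) given by σ(α,s,β) = (φ(α), u(α)·h(s)·u(β)⁻¹, φ(β)) for s ∉ I_h, σ(α,s,β) = 0₂ for s ∈ I_h∖{0_S}, and σ(0₁) = 0₂, is a non-trivial semigroup homomorphism. -/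

import Mathlib

attribute [local instance] Classical.propDecidable

/-- The Brandt `λ⁰`-extension of a semigroup `S` with zero, with index set `I`:
its elements are `0` (encoded `none`) and triples `(α, s, β)` with `s ≠ 0`. -/
def Brandt (I S : Type*) [Zero S] : Type _ := Option (I × {s : S // s ≠ 0} × I)

instance brandtZero {I S : Type*} [Zero S] : Zero (Brandt I S) := ⟨none⟩

/-- Multiplication on the Brandt `λ⁰`-extension. -/
noncomputable def brandtMul {I S : Type*} [Zero S] [Mul S] :
    Brandt I S → Brandt I S → Brandt I S
  | some (α, a, β), some (γ, b, δ) =>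
      if h : β = γ ∧ a.1 * b.1 ≠ 0 then some (α, ⟨a.1 * b.1, h.2⟩, δ) else none
  | _, _ => none

noncomputable instance brandtMulInst {I S : Type*} [Zero S] [Mul S] :
    Mul (Brandt I S) := ⟨brandtMul⟩

/-- The semigroup of `I × I`-matrix units. -/
def MatrixUnits (I : Type*) := Option (I × I)

instance muZero {I : Type*} : Zero (MatrixUnits I) := ⟨none⟩

noncomputable instance muMul {I : Type*} : Mul (MatrixUnits I) :=
  ⟨fun x y => match x, y with
    | some (a, b), some (c, d) => if b = c then some (a, d) else none
    | _, _ => none⟩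

/-- The subset of `Brandt I S` induced by a subset `T ⊆ S`
(the Brandt extension of `T` inside that of `S`). -/
def brandtSet {I S : Type*} [Zero S] (T : Set S) : Set (Brandt I S) :=
  {z | z = 0 ∨ ∃ (α β : I) (s : {s : S // s ≠ 0}), s.1 ∈ T ∧ z = some (α, s, β)}

/-- The map `B⁰_{λ₁}(S) → B⁰_{λ₂}(T)` induced by `h : S → T`, an index map `φ`
and families `u`, `v` (`v` playing the role of `a ↦ u(a)⁻¹`):
`(α,s,β) ↦ (φ α, u α · h s · v β, φ β)` when the middle entry is nonzero, else `0`. -/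
noncomputable def brandtHomMap {I₁ I₂ S T : Type*} [Zero S] [Zero T] [Mul T]
    (φ : I₁ → I₂) (u v : I₁ → T) (h : S → T) : Brandt I₁ S → Brandt I₂ T
  | some (a, s, b) =>
      if hh : u a * h s.1 * v b ≠ 0 then
        some (φ a, ⟨u a * h s.1 * v b, hh⟩, φ b) else none
  | none => none

/-- The canonical copy of `S` in `Brandt I S` at index `α` (the set `S_{α,α}`). -/
noncomputable def brandtIncl {I S : Type*} [Zero S] (α : I) : S → Brandt I S :=
  fun s => if h : s = 0 then 0 else some (α, ⟨s, h⟩, α)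

/-- The non-zero element `(α, s, β)` of `Brandt I S`. -/
def brandtElt {I S : Type*} [Zero S] (α : I) (s : {s : S // s ≠ 0}) (β : I) :
    Brandt I S := some (α, s, β)


/-!
Write `σ` for `brandtHomMap φ u v h` and `mk α s β` for the element `(α, s, β)`, read as `0`
when `s = 0`. Then `σ (mk α s β) = mk (φ α) (u α * h s * v β) (φ β)` for every `s`, and
`mk α x β * mk γ y δ` is `mk α (x * y) δ` if `β = γ` and `0` otherwise. Since `v β * u β = e`
acts as the identity on the image of `h`, the middle entries multiply like `h`:
`(u α * h s * v β) * (u β * h t * v δ) = u α * h (s * t) * v δ`, and injectivity of `φ` keeps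
apart the index pairs that `B⁰_{λ₁}(S)` keeps apart; hence `σ` is multiplicative. The middle
entry vanishes exactly when `h s` does, because `h s = v α * (u α * h s * v β) * u β`; and
`σ (α, 1, α) = (φ α, e, φ α) ≠ 0` shows that `σ` is not constant.
-/

namespace Brandt

variable {I S : Type*}

noncomputable def mk [Zero S] (α : I) (s : S) (β : I) : Brandt I S :=
  if hs : s = 0 then 0 else brandtElt α ⟨s, hs⟩ β

theorem mk_zero [Zero S] (α β : I) : mk α (0 : S) β = 0 := dif_pos rfl

theorem mk_of_ne_zero [Zero S] {α β : I} {s : S} (hs : s ≠ 0) :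
    mk α s β = brandtElt α ⟨s, hs⟩ β :=
  dif_neg hs

theorem mk_ne_zero [Zero S] {α β : I} {s : S} (hs : s ≠ 0) : mk α s β ≠ 0 := by
  rw [mk_of_ne_zero hs]
  exact Option.some_ne_none _

theorem eq_zero_or_exists_eq_mk [Zero S] (x : Brandt I S) :
    x = 0 ∨ ∃ (α : I) (s : S) (β : I), x = mk α s β := by
  rcases x with _ | ⟨α, s, β⟩
  · exact Or.inl rfl
  · exact Or.inr ⟨α, s.1, β, (mk_of_ne_zero s.2).symm⟩

protected theorem zero_mul [Zero S] [Mul S] (x : Brandt I S) : 0 * x = 0 := rfl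

protected theorem mul_zero [Zero S] [Mul S] (x : Brandt I S) : x * 0 = 0 := by
  rcases x with _ | _ <;> rfl

theorem mk_mul_mk_same [MulZeroClass S] (α β δ : I) (x y : S) :
    mk α x β * mk β y δ = mk α (x * y) δ := by
  by_cases hx : x = 0
  · rw [hx, mk_zero, Brandt.zero_mul, zero_mul, mk_zero]
  by_cases hy : y = 0
  · rw [hy, mk_zero, Brandt.mul_zero, mul_zero, mk_zero]
  rw [mk_of_ne_zero hx, mk_of_ne_zero hy]
  by_cases hxy : x * y = 0
  · rw [hxy, mk_zero]
    exact dif_neg fun h => h.2 hxy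
  · rw [mk_of_ne_zero hxy]
    exact dif_pos ⟨rfl, hxy⟩

theorem mk_mul_mk_of_ne [MulZeroClass S] {α β γ δ : I} (hβγ : β ≠ γ) (x y : S) :
    mk α x β * mk γ y δ = 0 := by
  by_cases hx : x = 0
  · rw [hx, mk_zero, Brandt.zero_mul]
  by_cases hy : y = 0
  · rw [hy, mk_zero, Brandt.mul_zero]
  rw [mk_of_ne_zero hx, mk_of_ne_zero hy]
  exact dif_neg fun h => hβγ h.1

end Brandt

open Brandt

theorem sandwich_mul_sandwich {T : Type*} [Semigroup T] {e x y a b c d : T}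
    (hcb : b * c = e) (hey : e * y = y) :
    (a * x * b) * (c * y * d) = a * (x * y) * d := by
  calc (a * x * b) * (c * y * d) = a * x * ((b * c) * y) * d := by simp only [mul_assoc]
    _ = a * (x * y) * d := by rw [hcb, hey, mul_assoc a]

theorem sandwich_ne_zero {T : Type*} [SemigroupWithZero T] {e x a a' b b' : T}
    (ha : a' * a = e) (hb : b * b' = e) (hx : e * x * e = x) (hx0 : x ≠ 0) :
    a * x * b ≠ 0 := by
  intro hzero
  apply hx0
  calc x = (a' * a) * x * (b * b') := by rw [ha, hb, hx]
    _ = a' * (a * x * b) * b' := by simp only [mul_assoc]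
    _ = 0 := by rw [hzero, mul_zero, zero_mul]

section BrandtHomMap

variable {I₁ I₂ S T : Type*} [MulZeroClass S] [SemigroupWithZero T]
  {φ : I₁ → I₂} {u v : I₁ → T} {h : S → T}

theorem brandtHomMap_zero : brandtHomMap φ u v h 0 = 0 := rfl

theorem brandtHomMap_brandtElt (α β : I₁) (s : {s : S // s ≠ 0}) :
    brandtHomMap φ u v h (brandtElt α s β) = mk (φ α) (u α * h s * v β) (φ β) := by
  by_cases hw : u α * h s * v β = 0
  · rw [hw, mk_zero]
    exact dif_neg (not_not_intro hw)
  · rw [mk_of_ne_zero hw]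
    exact dif_pos hw

theorem brandtHomMap_mk (h0 : h 0 = 0) (α β : I₁) (s : S) :
    brandtHomMap φ u v h (mk α s β) = mk (φ α) (u α * h s * v β) (φ β) := by
  by_cases hs : s = 0
  · rw [hs, mk_zero, h0, mul_zero, zero_mul, mk_zero]
    rfl
  · rw [mk_of_ne_zero hs, brandtHomMap_brandtElt]

theorem brandtHomMap_mul (hφ : Function.Injective φ) (h0 : h 0 = 0)
    (hsandwich : ∀ (α β δ : I₁) (s t : S),
      (u α * h s * v β) * (u β * h t * v δ) = u α * h (s * t) * v δ)
    (x y : Brandt I₁ S) :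
    brandtHomMap φ u v h (x * y) = brandtHomMap φ u v h x * brandtHomMap φ u v h y := by
  rcases eq_zero_or_exists_eq_mk x with rfl | ⟨α, a, β, rfl⟩
  · rw [Brandt.zero_mul, brandtHomMap_zero, Brandt.zero_mul]
  rcases eq_zero_or_exists_eq_mk y with rfl | ⟨γ, b, δ, rfl⟩
  · rw [Brandt.mul_zero, brandtHomMap_zero, Brandt.mul_zero]
  rw [brandtHomMap_mk h0, brandtHomMap_mk h0]
  by_cases hβγ : β = γ
  · subst hβγ
    rw [mk_mul_mk_same, mk_mul_mk_same, brandtHomMap_mk h0, hsandwich]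
  · rw [mk_mul_mk_of_ne hβγ, mk_mul_mk_of_ne (hφ.ne hβγ), brandtHomMap_zero]

end BrandtHomMap

theorem brandt_hom_construction_general {I₁ I₂ S T : Type*}
    [MonoidWithZero S] [MonoidWithZero T] [Nonempty I₁]
    (h : S → T) (hm : ∀ s t : S, h (s * t) = h s * h t) (h0 : h 0 = 0)
    (φ : I₁ → I₂) (hφ : Function.Injective φ)
    (e : T) (he0 : e ≠ 0) (h1 : h 1 = e)
    (u v : I₁ → T)
    (hu : ∀ a : I₁, u a * e = u a ∧ e * u a = u a ∧ v a * e = v a ∧ e * v a = v a ∧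
      u a * v a = e ∧ v a * u a = e) :
    ((0 : S) ∈ {s : S | h s = 0} ∧
      ∀ s ∈ {s : S | h s = 0}, ∀ t : S,
        s * t ∈ {s : S | h s = 0} ∧ t * s ∈ {s : S | h s = 0}) ∧
    (∀ x y : Brandt I₁ S,
      brandtHomMap φ u v h (x * y) = brandtHomMap φ u v h x * brandtHomMap φ u v h y) ∧
    (∃ x y : Brandt I₁ S, brandtHomMap φ u v h x ≠ brandtHomMap φ u v h y) ∧
    brandtHomMap φ u v h (0 : Brandt I₁ S) = 0 ∧
    (∀ (a b : I₁) (s : {s : S // s ≠ 0}), h s.1 = 0 →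
      brandtHomMap φ u v h (brandtElt a s b) = 0) ∧
    (∀ (a b : I₁) (s : {s : S // s ≠ 0}), h s.1 ≠ 0 →
      ∃ hw : u a * h s.1 * v b ≠ 0,
        brandtHomMap φ u v h (brandtElt a s b) =
          brandtElt (φ a) ⟨u a * h s.1 * v b, hw⟩ (φ b)) := by
  have he_mul : ∀ s, e * h s = h s := fun s => by rw [← h1, ← hm, one_mul]
  have mul_he : ∀ s, h s * e = h s := fun s => by rw [← h1, ← hm, mul_one]
  have hw : ∀ a b s, h s ≠ 0 → u a * h s * v b ≠ 0 := fun a b s =>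
    sandwich_ne_zero (hu a).2.2.2.2.2 (hu b).2.2.2.2.2 (by rw [he_mul, mul_he])
  obtain ⟨α⟩ := ‹Nonempty I₁›
  refine ⟨⟨h0, fun s hs t => ?_⟩, brandtHomMap_mul hφ h0 fun α β δ s t => ?_,
    ⟨mk α 1 α, 0, ?_⟩, rfl, fun a b s hs => ?_, fun a b s hs => ⟨hw a b s hs, ?_⟩⟩
  · have hs : h s = 0 := hs
    exact ⟨show h (s * t) = 0 by rw [hm, hs, zero_mul],
      show h (t * s) = 0 by rw [hm, hs, mul_zero]⟩
  · rw [sandwich_mul_sandwich (hu β).2.2.2.2.2 (he_mul t), hm]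
  · rw [brandtHomMap_mk h0, brandtHomMap_zero, h1, (hu α).1, (hu α).2.2.2.2.1]
    exact mk_ne_zero he0
  · rw [brandtHomMap_brandtElt, hs, mul_zero, zero_mul, mk_zero]
  · rw [brandtHomMap_brandtElt, mk_of_ne_zero]

/-- Given a zero-preserving homomorphism `h : S → T` with `h 1 = e`
(`e` a nonzero idempotent), an injection `φ : I₁ → I₂`, and `u : I₁ → H_e`
(with pointwise group inverses `v`), the set `I_h = h⁻¹(0)` is an ideal of `S`
and the induced map `σ = brandtHomMap φ u v h` is a non-trivial homomorphism
`B⁰_{λ₁}(S) → B⁰_{λ₂}(T)` given by the stated formulas. -/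
theorem brandt_hom_construction {I₁ I₂ S T : Type*}
    [MonoidWithZero S] [MonoidWithZero T] [Nonempty I₁]
    (h1S : (1 : S) ≠ 0)
    (h : S → T) (hm : ∀ s t : S, h (s * t) = h s * h t) (h0 : h 0 = 0)
    (φ : I₁ → I₂) (hφ : Function.Injective φ)
    (e : T) (he : e * e = e) (he0 : e ≠ 0) (h1 : h 1 = e)
    (u v : I₁ → T)
    (hu : ∀ a : I₁, u a * e = u a ∧ e * u a = u a ∧ v a * e = v a ∧ e * v a = v a ∧
      u a * v a = e ∧ v a * u a = e) :
    ((0 : S) ∈ {s : S | h s = 0} ∧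
      ∀ s ∈ {s : S | h s = 0}, ∀ t : S,
        s * t ∈ {s : S | h s = 0} ∧ t * s ∈ {s : S | h s = 0}) ∧
    (∀ x y : Brandt I₁ S,
      brandtHomMap φ u v h (x * y) = brandtHomMap φ u v h x * brandtHomMap φ u v h y) ∧
    (∃ x y : Brandt I₁ S, brandtHomMap φ u v h x ≠ brandtHomMap φ u v h y) ∧
    brandtHomMap φ u v h (0 : Brandt I₁ S) = 0 ∧
    (∀ (a b : I₁) (s : {s : S // s ≠ 0}), h s.1 = 0 →
      brandtHomMap φ u v h (brandtElt a s b) = 0) ∧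
    (∀ (a b : I₁) (s : {s : S // s ≠ 0}), h s.1 ≠ 0 →
      ∃ hw : u a * h s.1 * v b ≠ 0,
        brandtHomMap φ u v h (brandtElt a s b) =
          brandtElt (φ a) ⟨u a * h s.1 * v b, hw⟩ (φ b)) :=
  brandt_hom_construction_general h hm h0 φ hφ e he0 h1 u v hu
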